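/- Let μ = μ_1 × ⋯ × μ_n be a product probability measure on {0,1}^n, let q be a positive integer, and let A_1, …, A_q ⊆ {0,1}^n each have μ(A_i) > 0. Then for every natural number k, μ({x : h(x; A_1, …, A_q) > k}) ≤ q^{−k−1} / ∏_{i=1}^{q} μ(A_i). -/

import Mathlib

open scoped Classical

/-- Probability weight of the point `x ∈ {0,1}ⁿ` under the product measure in which
coordinate `i` equals `true` with probability `w i`, independently. -/
noncomputable def cubeWt {n : ℕ} (w : Fin n → ℝ) (x : Fin n → Bool) : ℝ :=
  ∏ i : Fin n, if x i then w i else 1 - w i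

/-- Probability of the event `E` under the product measure given by `w`. -/
noncomputable def cubePr {n : ℕ} (w : Fin n → ℝ) (E : (Fin n → Bool) → Prop) : ℝ :=
  ∑ x : Fin n → Bool, if E x then cubeWt w x else 0

/-- Expectation of `f` under the product measure given by `w`. -/
noncomputable def cubeExp {n : ℕ} (w : Fin n → ℝ) (f : (Fin n → Bool) → ℝ) : ℝ :=
  ∑ x : Fin n → Bool, cubeWt w x * f x

/-- Hamming distance between two points of `{0,1}ⁿ`. -/
def hamm {n : ℕ} (x y : Fin n → Bool) : ℕ :=
  (Finset.univ.filter fun i => x i ≠ y i).card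

/-- Talagrand's distance `h(x; y¹, …, y^q) = |{i : x i ∉ {y¹ i, …, y^q i}}|`. -/
def hTup {n q : ℕ} (x : Fin n → Bool) (y : Fin q → Fin n → Bool) : ℕ :=
  (Finset.univ.filter fun i => ∀ j, x i ≠ y j i).card

/-- Talagrand's distance from `x` to the sets `A 1, …, A q`:
`h(x; A₁, …, A_q) = min { h(x; y¹, …, y^q) : y¹ ∈ A₁, …, y^q ∈ A_q }`. -/
noncomputable def hSet {n q : ℕ} (x : Fin n → Bool)
    (A : Fin q → Set (Fin n → Bool)) : ℕ :=
  sInf {k | ∃ y : Fin q → Fin n → Bool, (∀ j, y j ∈ A j) ∧ hTup x y = k}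

section basic

variable {n : ℕ} {w : Fin n → ℝ}

lemma cubeWt_nonneg (hw : ∀ i, 0 ≤ w i ∧ w i ≤ 1) (x : Fin n → Bool) :
    0 ≤ cubeWt w x :=
  Finset.prod_nonneg fun i _ => by
    rcases hw i with ⟨h0, h1⟩
    by_cases h : x i <;> simp [h] <;> linarith

lemma cubePr_nonneg (hw : ∀ i, 0 ≤ w i ∧ w i ≤ 1) (E : (Fin n → Bool) → Prop) :
    0 ≤ cubePr w E :=
  Finset.sum_nonneg fun x _ => by
    by_cases h : E x <;> simp [h, cubeWt_nonneg hw]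

lemma cubePr_mono (hw : ∀ i, 0 ≤ w i ∧ w i ≤ 1) {E F : (Fin n → Bool) → Prop}
    (h : ∀ x, E x → F x) : cubePr w E ≤ cubePr w F :=
  Finset.sum_le_sum fun x _ => by
    by_cases hx : E x
    · simp [hx, h x hx]
    · by_cases hy : F x <;> simp [hx, hy, cubeWt_nonneg hw]

lemma cubeExp_nonneg (hw : ∀ i, 0 ≤ w i ∧ w i ≤ 1) {f : (Fin n → Bool) → ℝ}
    (hf : ∀ x, 0 ≤ f x) : 0 ≤ cubeExp w f :=
  Finset.sum_nonneg fun x _ => mul_nonneg (cubeWt_nonneg hw x) (hf x)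

lemma cubeExp_mono (hw : ∀ i, 0 ≤ w i ∧ w i ≤ 1) {f g : (Fin n → Bool) → ℝ}
    (h : ∀ x, f x ≤ g x) : cubeExp w f ≤ cubeExp w g :=
  Finset.sum_le_sum fun x _ => mul_le_mul_of_nonneg_left (h x) (cubeWt_nonneg hw x)

lemma nonempty_of_cubePr_pos {A : Set (Fin n → Bool)}
    (h : 0 < cubePr w (fun x => x ∈ A)) : A.Nonempty := by
  by_contra hA
  rw [Set.not_nonempty_iff_eq_empty] at hA
  subst hA
  simp [cubePr] at h

end basic

section cons

variable {n : ℕ}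

lemma sum_cons_eq {β : Type*} [AddCommMonoid β] (F : (Fin (n + 1) → Bool) → β) :
    ∑ x : Fin (n + 1) → Bool, F x
      = ∑ b : Bool, ∑ z : Fin n → Bool, F (Fin.cons b z) := by
  rw [← (Fin.consEquiv (fun _ => Bool)).sum_comp F, Fintype.sum_prod_type]
  rfl

lemma cubeWt_cons (w : Fin (n + 1) → ℝ) (b : Bool) (z : Fin n → Bool) :
    cubeWt w (Fin.cons b z)
      = (if b then w 0 else 1 - w 0) * cubeWt (Fin.tail w) z := by
  unfold cubeWt
  rw [Fin.prod_univ_succ]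
  simp [Fin.tail]

lemma cubePr_cons (w : Fin (n + 1) → ℝ) (E : (Fin (n + 1) → Bool) → Prop) :
    cubePr w E = ∑ b : Bool, (if b then w 0 else 1 - w 0) *
      cubePr (Fin.tail w) (fun z => E (Fin.cons b z)) := by
  unfold cubePr
  rw [sum_cons_eq (fun x => if E x then cubeWt w x else 0)]
  refine Finset.sum_congr rfl fun b _ => ?_
  rw [Finset.mul_sum]
  refine Finset.sum_congr rfl fun z _ => ?_
  rw [cubeWt_cons]
  by_cases h : E (Fin.cons b z) <;> simp [h]

lemma cubeExp_cons (w : Fin (n + 1) → ℝ) (f : (Fin (n + 1) → Bool) → ℝ) :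
    cubeExp w f = ∑ b : Bool, (if b then w 0 else 1 - w 0) *
      cubeExp (Fin.tail w) (fun z => f (Fin.cons b z)) := by
  unfold cubeExp
  rw [sum_cons_eq (fun x => cubeWt w x * f x)]
  refine Finset.sum_congr rfl fun b _ => ?_
  rw [Finset.mul_sum]
  refine Finset.sum_congr rfl fun z _ => ?_
  rw [cubeWt_cons, mul_assoc]

lemma hTup_cons {q : ℕ} (b : Bool) (z : Fin n → Bool) (c : Fin q → Bool)
    (y : Fin q → Fin n → Bool) :
    hTup (Fin.cons b z) (fun j => Fin.cons (c j) (y j))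
      = (if ∀ j, b ≠ c j then 1 else 0) + hTup z y := by
  unfold hTup
  rw [Finset.card_filter, Finset.card_filter, Fin.sum_univ_succ]
  simp

end cons

section hset

variable {n q : ℕ}

lemma hSet_le (x : Fin n → Bool) {A : Fin q → Set (Fin n → Bool)}
    {y : Fin q → Fin n → Bool} (hy : ∀ j, y j ∈ A j) : hSet x A ≤ hTup x y :=
  Nat.sInf_le ⟨y, hy, rfl⟩

lemma hSet_exists (x : Fin n → Bool) {A : Fin q → Set (Fin n → Bool)}
    (hA : ∀ j, (A j).Nonempty) :
    ∃ y : Fin q → Fin n → Bool, (∀ j, y j ∈ A j) ∧ hTup x y = hSet x A := by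
  have hne : {k | ∃ y : Fin q → Fin n → Bool, (∀ j, y j ∈ A j) ∧ hTup x y = k}.Nonempty :=
    ⟨hTup x (fun j => (hA j).choose), fun j => (hA j).choose, fun j => (hA j).choose_spec, rfl⟩
  exact Nat.sInf_mem hne

end hset

section analytic

lemma env_lemma {q : ℕ} (hq : 0 < q) {r : ℝ} (hr0 : 0 < r) (hr1 : r ≤ 1) :
    min (q : ℝ) r⁻¹ ≤ q + 1 - q * r := by
  have hq1 : (1 : ℝ) ≤ q := by exact_mod_cast hq
  by_cases h : q * r ≤ 1
  · calc min (q : ℝ) r⁻¹ ≤ q := min_le_left _ _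
      _ ≤ q + 1 - q * r := by linarith
  · push_neg at h
    calc min (q : ℝ) r⁻¹ ≤ r⁻¹ := min_le_right _ _
      _ ≤ q + 1 - q * r := by
        rw [inv_le_iff_one_le_mul₀ hr0]
        nlinarith [mul_nonneg (le_of_lt (sub_pos.2 h)) (sub_nonneg.2 hr1)]

lemma env_lemma2 (q : ℕ) {m : ℝ} (hm0 : 0 < m) (hm1 : m ≤ 1) :
    (q : ℝ) + 1 - q * m ≤ (m ^ q)⁻¹ := by
  have hpow : (0:ℝ) < m ^ q := by positivity
  rw [inv_eq_one_div, le_div_iff₀ hpow]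
  induction q with
  | zero => simpa using hm1
  | succ q ih =>
    have key : ((q : ℝ) + 1 + 1 - ((q : ℝ) + 1) * m) * m ≤ (q : ℝ) + 1 - q * m := by
      nlinarith [mul_nonneg (by positivity : (0:ℝ) ≤ (q:ℝ)+1) (sq_nonneg (m - 1))]
    have h1 : ((↑(q+1) : ℝ) + 1 - (↑(q+1) : ℝ) * m) * m ^ (q+1)
        = (((q : ℝ) + 1 + 1 - ((q : ℝ) + 1) * m) * m) * m ^ q := by push_cast; ring
    rw [h1]
    calc (((q : ℝ) + 1 + 1 - ((q : ℝ) + 1) * m) * m) * m ^ q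
        ≤ ((q : ℝ) + 1 - q * m) * m ^ q :=
          mul_le_mul_of_nonneg_right key (by positivity)
      _ ≤ 1 := ih (by positivity)

end analytic
lemma talagrand_exp : ∀ (n : ℕ) (w : Fin n → ℝ), (∀ i, 0 ≤ w i ∧ w i ≤ 1) →
    ∀ (q : ℕ), 0 < q → ∀ (A : Fin q → Set (Fin n → Bool)), (∀ j, (A j).Nonempty) →
    (∏ j, cubePr w (fun x => x ∈ A j)) *
      cubeExp w (fun x => (q : ℝ) ^ (hSet x A)) ≤ 1 := by
  intro n
  induction n with
  | zero =>
    intro w hw q hq A hA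
    have hx : ∀ x : Fin 0 → Bool, hSet x A = 0 := by
      intro x
      have hmem : ∀ j, (fun j => (hA j).choose) j ∈ A j := fun j => (hA j).choose_spec
      have h1 := hSet_le x hmem
      have h0 : hTup x (fun j => (hA j).choose) = 0 := by simp [hTup]
      omega
    have hexp : cubeExp w (fun x => (q : ℝ) ^ hSet x A) = 1 := by
      simp [cubeExp, hx, cubeWt]
    rw [hexp, mul_one]
    refine Finset.prod_le_one (fun j _ => cubePr_nonneg hw _) (fun j _ => ?_)
    have hb : ∀ x : Fin 0 → Bool, cubeWt w x = 1 := fun x => by simp [cubeWt]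
    calc cubePr w (fun x => x ∈ A j)
        ≤ ∑ x : Fin 0 → Bool, cubeWt w x :=
          Finset.sum_le_sum fun x _ => by
            by_cases h : x ∈ A j <;> simp [h, cubeWt_nonneg hw]
      _ = 1 := by simp [hb]
  | succ n ih =>
    intro w hw q hq A hA
    have hq1 : (1:ℝ) ≤ (q:ℝ) := by exact_mod_cast hq
    set w' : Fin n → ℝ := Fin.tail w with hw'def
    have hw' : ∀ i, 0 ≤ w' i ∧ w' i ≤ 1 := fun i => hw i.succ
    set μ : Bool → ℝ := fun b => if b then w 0 else 1 - w 0 with hμdef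
    have hμ0 : ∀ b, 0 ≤ μ b := by
      intro b; rcases hw 0 with ⟨h0, h1⟩; cases b <;> simp [hμdef] <;> linarith
    have hμsum : μ true + μ false = 1 := by simp [hμdef]
    set S : Fin q → Bool → Set (Fin n → Bool) := fun j b => {z | Fin.cons b z ∈ A j} with hSdef
    set P : Fin q → Set (Fin n → Bool) := fun j => {z | ∃ c, Fin.cons c z ∈ A j} with hPdef
    have hPne : ∀ j, (P j).Nonempty := by
      intro j
      obtain ⟨x, hx⟩ := hA j
      refine ⟨Fin.tail x, x 0, ?_⟩
      rwa [Fin.cons_self_tail]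
    set σ : Fin q → Bool → ℝ := fun j b => cubePr w' (fun z => z ∈ S j b) with hσdef
    set π : Fin q → ℝ := fun j => cubePr w' (fun z => z ∈ P j) with hπdef
    have hσ0 : ∀ j b, 0 ≤ σ j b := fun j b => cubePr_nonneg hw' _
    have hπ0 : ∀ j, 0 ≤ π j := fun j => cubePr_nonneg hw' _
    have hσπ : ∀ j b, σ j b ≤ π j := fun j b =>
      cubePr_mono hw' fun z hz => ⟨b, hz⟩
    have hPrA : ∀ j, cubePr w (fun x => x ∈ A j)
        = μ true * σ j true + μ false * σ j false := by
      intro j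
      rw [cubePr_cons]
      rw [Fintype.sum_bool]
      rfl
    set E : Bool → ℝ := fun b => cubeExp w' (fun z => (q:ℝ) ^ hSet (Fin.cons b z) A) with hEdef
    have hE0 : ∀ b, 0 ≤ E b := fun b => cubeExp_nonneg hw' fun z => by positivity
    have hExp : cubeExp w (fun x => (q:ℝ) ^ hSet x A)
        = μ true * E true + μ false * E false := by
      rw [cubeExp_cons, Fintype.sum_bool]
    by_cases hπpos : ∀ j, 0 < π j
    swap
    · push_neg at hπpos
      obtain ⟨j, hj⟩ := hπpos
      have hπj : π j = 0 := le_antisymm hj (hπ0 j)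
      have hAj : cubePr w (fun x => x ∈ A j) = 0 := by
        have h1 : σ j true = 0 := le_antisymm (hπj ▸ hσπ j true) (hσ0 j true)
        have h2 : σ j false = 0 := le_antisymm (hπj ▸ hσπ j false) (hσ0 j false)
        rw [hPrA j, h1, h2]; ring
      rw [Finset.prod_eq_zero (Finset.mem_univ j) hAj, zero_mul]
      exact zero_le_one
    by_cases hApos : ∀ j, 0 < cubePr w (fun x => x ∈ A j)
    swap
    · push_neg at hApos
      obtain ⟨j, hj⟩ := hApos
      have hAj : cubePr w (fun x => x ∈ A j) = 0 := le_antisymm hj (cubePr_nonneg hw _)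
      rw [Finset.prod_eq_zero (Finset.mem_univ j) hAj, zero_mul]
      exact zero_le_one
    -- main case
    set v : Bool → ℝ := fun b => (∏ j, π j) * E b with hvdef
    have hπprod : 0 < ∏ j, π j := Finset.prod_pos fun j _ => hπpos j
    have hv0 : ∀ b, 0 ≤ v b := fun b => mul_nonneg hπprod.le (hE0 b)
    have hIHP := ih w' hw' q hq P hPne
    have hstep1 : ∀ b z, hSet (Fin.cons b z) A ≤ 1 + hSet z P := by
      intro b z
      obtain ⟨y, hy, hyval⟩ := hSet_exists z hPne
      have hc : ∀ j, ∃ c, Fin.cons c (y j) ∈ A j := fun j => hy j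
      choose c hcc using hc
      have hle := hSet_le (Fin.cons b z) (y := fun j => Fin.cons (c j) (y j)) hcc
      rw [hTup_cons] at hle
      have hif : (if ∀ j, b ≠ c j then 1 else 0) ≤ 1 := by split <;> omega
      omega
    have hvq : ∀ b, v b ≤ q := by
      intro b
      have h1 : E b ≤ (q:ℝ) * cubeExp w' (fun z => (q:ℝ) ^ hSet z P) := by
        calc E b ≤ cubeExp w' (fun z => (q:ℝ) ^ (1 + hSet z P)) :=
              cubeExp_mono hw' fun z => pow_le_pow_right₀ hq1 (hstep1 b z)
          _ = (q:ℝ) * cubeExp w' (fun z => (q:ℝ) ^ hSet z P) := by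
              simp only [cubeExp, pow_add, pow_one]
              rw [Finset.mul_sum]
              exact Finset.sum_congr rfl fun z _ => by ring
      calc v b = (∏ j, π j) * E b := rfl
        _ ≤ (∏ j, π j) * ((q:ℝ) * cubeExp w' (fun z => (q:ℝ) ^ hSet z P)) :=
            mul_le_mul_of_nonneg_left h1 hπprod.le
        _ = (q:ℝ) * ((∏ j, π j) * cubeExp w' (fun z => (q:ℝ) ^ hSet z P)) := by ring
        _ ≤ (q:ℝ) * 1 := mul_le_mul_of_nonneg_left hIHP (by positivity)
        _ = q := mul_one _
    have hstep2 : ∀ b (j : Fin q), 0 < σ j b → v b ≤ π j / σ j b := by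
      intro b j hσpos
      set C : Fin q → Set (Fin n → Bool) := Function.update P j (S j b) with hCdef
      have hCne : ∀ i, (C i).Nonempty := by
        intro i
        by_cases h : i = j
        · subst h
          rw [hCdef]
          simp only [Function.update_self]
          exact nonempty_of_cubePr_pos hσpos
        · rw [hCdef, Function.update_of_ne h]
          exact hPne i
      have hIHC := ih w' hw' q hq C hCne
      have hπsplit : (∏ i, π i) = π j * ∏ i ∈ Finset.univ.erase j, π i :=
        (Finset.mul_prod_erase Finset.univ π (Finset.mem_univ j)).symm
      have hprodC : (∏ i, cubePr w' (fun z => z ∈ C i))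
          = σ j b * ∏ i ∈ Finset.univ.erase j, π i := by
        rw [← Finset.mul_prod_erase Finset.univ _ (Finset.mem_univ j)]
        congr 1
        · rw [hCdef]
          simp only [Function.update_self]
          rfl
        · exact Finset.prod_congr rfl fun i hi => by
            rw [hCdef, Function.update_of_ne (Finset.ne_of_mem_erase hi)]
      have hptC : ∀ z, hSet (Fin.cons b z) A ≤ hSet z C := by
        intro z
        obtain ⟨y, hy, hyval⟩ := hSet_exists z hCne
        have hc : ∀ i, ∃ ci, Fin.cons ci (y i) ∈ A i ∧ (i = j → ci = b) := by
          intro i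
          by_cases h : i = j
          · subst h
            have hyj : y i ∈ S i b := by
              have := hy i; rwa [hCdef, Function.update_self] at this
            exact ⟨b, hyj, fun _ => rfl⟩
          · have hyi : y i ∈ P i := by
              have := hy i; rwa [hCdef, Function.update_of_ne h] at this
            obtain ⟨ci, hci⟩ := hyi
            exact ⟨ci, hci, fun hij => absurd hij h⟩
        choose c hc1 hc2 using hc
        have hle := hSet_le (Fin.cons b z) (y := fun i => Fin.cons (c i) (y i)) hc1
        rw [hTup_cons] at hle
        rw [if_neg (by intro h; exact h j (hc2 j rfl).symm)] at hle
        omega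
      have hEle : E b ≤ cubeExp w' (fun z => (q:ℝ) ^ hSet z C) :=
        cubeExp_mono hw' fun z => pow_le_pow_right₀ hq1 (hptC z)
      have h2 : (σ j b * ∏ i ∈ Finset.univ.erase j, π i) * E b ≤ 1 := by
        calc (σ j b * ∏ i ∈ Finset.univ.erase j, π i) * E b
            ≤ (σ j b * ∏ i ∈ Finset.univ.erase j, π i)
                * cubeExp w' (fun z => (q:ℝ) ^ hSet z C) := by
              refine mul_le_mul_of_nonneg_left hEle ?_
              exact mul_nonneg (hσ0 j b) (Finset.prod_nonneg fun i _ => hπ0 i)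
          _ = (∏ i, cubePr w' (fun z => z ∈ C i))
                * cubeExp w' (fun z => (q:ℝ) ^ hSet z C) := by rw [hprodC]
          _ ≤ 1 := hIHC
      rw [le_div_iff₀ hσpos]
      have h3 : v b * σ j b
          = π j * ((σ j b * ∏ i ∈ Finset.univ.erase j, π i) * E b) := by
        rw [hvdef]
        simp only
        rw [hπsplit]; ring
      rw [h3]
      calc π j * ((σ j b * ∏ i ∈ Finset.univ.erase j, π i) * E b)
          ≤ π j * 1 := mul_le_mul_of_nonneg_left h2 (hπ0 j)
        _ = π j := mul_one _
    have henv : ∀ b (j : Fin q), v b ≤ (q:ℝ) + 1 - q * (σ j b / π j) := by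
      intro b j
      by_cases h : 0 < σ j b
      · have hr0 : 0 < σ j b / π j := div_pos h (hπpos j)
        have hr1 : σ j b / π j ≤ 1 := (div_le_one (hπpos j)).2 (hσπ j b)
        have hmin : v b ≤ min (q:ℝ) (σ j b / π j)⁻¹ := by
          refine le_min (hvq b) ?_
          rw [inv_div]
          exact hstep2 b j h
        exact hmin.trans (env_lemma hq hr0 hr1)
      · have hσz : σ j b = 0 := le_antisymm (not_lt.1 h) (hσ0 j b)
        rw [hσz, zero_div, mul_zero, sub_zero]
        calc v b ≤ q := hvq b
          _ ≤ (q:ℝ) + 1 := by linarith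
    set m : Fin q → ℝ := fun j => cubePr w (fun x => x ∈ A j) / π j with hmdef
    have hm0 : ∀ j, 0 < m j := fun j => div_pos (hApos j) (hπpos j)
    have hm1 : ∀ j, m j ≤ 1 := by
      intro j
      rw [hmdef]
      simp only
      rw [div_le_one (hπpos j), hPrA j]
      calc μ true * σ j true + μ false * σ j false
          ≤ μ true * π j + μ false * π j :=
            add_le_add (mul_le_mul_of_nonneg_left (hσπ j true) (hμ0 true))
              (mul_le_mul_of_nonneg_left (hσπ j false) (hμ0 false))
        _ = π j := by rw [← add_mul, hμsum, one_mul]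
    have hmids : ∀ j, μ true * (σ j true / π j) + μ false * (σ j false / π j) = m j := by
      intro j
      rw [hmdef]
      simp only
      rw [hPrA j]
      field_simp
    have hsum : ∀ j, μ true * v true + μ false * v false ≤ (m j ^ q)⁻¹ := by
      intro j
      have h1 : μ true * v true + μ false * v false ≤ (q:ℝ) + 1 - q * m j := by
        calc μ true * v true + μ false * v false
            ≤ μ true * ((q:ℝ) + 1 - q * (σ j true / π j))
                + μ false * ((q:ℝ) + 1 - q * (σ j false / π j)) :=
              add_le_add (mul_le_mul_of_nonneg_left (henv true j) (hμ0 true))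
                (mul_le_mul_of_nonneg_left (henv false j) (hμ0 false))
          _ = ((q:ℝ) + 1) * (μ true + μ false)
                - q * (μ true * (σ j true / π j) + μ false * (σ j false / π j)) := by ring
          _ = (q:ℝ) + 1 - q * m j := by rw [hμsum, hmids j]; ring
      exact h1.trans (env_lemma2 q (hm0 j) (hm1 j))
    obtain ⟨js, _, hjs⟩ := Finset.exists_max_image Finset.univ m
      ⟨⟨0, hq⟩, Finset.mem_univ _⟩
    have h5 : ∏ j, m j ≤ m js ^ q := by
      calc ∏ j, m j ≤ ∏ _j : Fin q, m js :=
            Finset.prod_le_prod (fun j _ => (hm0 j).le)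
              (fun j _ => hjs j (Finset.mem_univ j))
        _ = m js ^ q := by rw [Finset.prod_const, Finset.card_univ, Fintype.card_fin]
    have hAm : ∀ j, cubePr w (fun x => x ∈ A j) = π j * m j := by
      intro j
      rw [hmdef]
      simp only
      rw [mul_comm, div_mul_cancel₀ _ (hπpos j).ne']
    have hprodA : (∏ j, cubePr w (fun x => x ∈ A j)) = (∏ j, π j) * ∏ j, m j := by
      rw [Finset.prod_congr rfl fun j _ => hAm j, Finset.prod_mul_distrib]
    rw [hExp, hprodA]
    have hre : (∏ j, π j) * (∏ j, m j) * (μ true * E true + μ false * E false)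
        = (∏ j, m j) * (μ true * v true + μ false * v false) := by
      rw [hvdef]; simp only; ring
    rw [hre]
    have hμv0 : 0 ≤ μ true * v true + μ false * v false :=
      add_nonneg (mul_nonneg (hμ0 true) (hv0 true)) (mul_nonneg (hμ0 false) (hv0 false))
    calc (∏ j, m j) * (μ true * v true + μ false * v false)
        ≤ m js ^ q * (m js ^ q)⁻¹ :=
          mul_le_mul h5 (hsum js) hμv0 (pow_nonneg (hm0 js).le q)
      _ = 1 := mul_inv_cancel₀ (pow_pos (hm0 js) q).ne'


/-- Tail form of Talagrand's inequality on the cube: for a product measure on `{0,1}ⁿ`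
and sets `A 1, …, A q` of positive measure, for every `k`,
`μ({x : h(x; A₁,…,A_q) > k}) ≤ q^{-k-1} / ∏ᵢ μ(Aᵢ)`. -/
theorem stmt6 {n : ℕ} (w : Fin n → ℝ) (hw : ∀ i, 0 ≤ w i ∧ w i ≤ 1)
    (q : ℕ) (hq : 0 < q) (A : Fin q → Set (Fin n → Bool))
    (hA : ∀ i, 0 < cubePr w (fun x => x ∈ A i)) (k : ℕ) :
    cubePr w (fun x => k < hSet x A) ≤
      ((q : ℝ) ^ (k + 1))⁻¹ / ∏ i, cubePr w (fun x => x ∈ A i) := by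
  have hq1 : (1:ℝ) ≤ (q:ℝ) := by exact_mod_cast hq
  have hA' : ∀ i, (A i).Nonempty := fun i => nonempty_of_cubePr_pos (hA i)
  have key := talagrand_exp n w hw q hq A hA'
  have hprodpos : 0 < ∏ i, cubePr w (fun x => x ∈ A i) :=
    Finset.prod_pos fun i _ => hA i
  have hE : cubeExp w (fun x => (q:ℝ) ^ hSet x A)
      ≤ (∏ i, cubePr w (fun x => x ∈ A i))⁻¹ := by
    rw [inv_eq_one_div, le_div_iff₀ hprodpos, mul_comm]
    exact key
  have hqk : (0:ℝ) < (q:ℝ) ^ (k + 1) := by positivity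
  have hmark : cubePr w (fun x => k < hSet x A) * (q:ℝ) ^ (k + 1)
      ≤ cubeExp w (fun x => (q:ℝ) ^ hSet x A) := by
    unfold cubePr cubeExp
    rw [Finset.sum_mul]
    refine Finset.sum_le_sum fun x _ => ?_
    by_cases hx : k < hSet x A
    · rw [if_pos hx]
      have hp : (q:ℝ) ^ (k + 1) ≤ (q:ℝ) ^ (hSet x A) :=
        pow_le_pow_right₀ hq1 hx
      exact mul_le_mul_of_nonneg_left hp (cubeWt_nonneg hw x)
    · rw [if_neg hx, zero_mul]
      exact mul_nonneg (cubeWt_nonneg hw x) (by positivity)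
  have h1 : cubePr w (fun x => k < hSet x A)
      ≤ cubeExp w (fun x => (q:ℝ) ^ hSet x A) / (q:ℝ) ^ (k + 1) :=
    (le_div_iff₀ hqk).2 hmark
  calc cubePr w (fun x => k < hSet x A)
      ≤ cubeExp w (fun x => (q:ℝ) ^ hSet x A) / (q:ℝ) ^ (k + 1) := h1
    _ ≤ (∏ i, cubePr w (fun x => x ∈ A i))⁻¹ / (q:ℝ) ^ (k + 1) :=
        by gcongr
    _ = ((q : ℝ) ^ (k + 1))⁻¹ / ∏ i, cubePr w (fun x => x ∈ A i) := by
        rw [div_eq_mul_inv, div_eq_mul_inv, mul_comm]
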